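/- Let A be an n-dimensional evolution algebra over a field F of characteristic ≠ 2 with natural basis e_1, …, e_n. Write e_i² = e_i·e_i, e_i³ = e_i²·e_i, e_i⁴ = e_i³·e_i. Then A is a Jordan algebra (i.e. (x²·y)·x = x²·(y·x) for all x, y ∈ A) if and only if: (1) e_i²·e_i² = e_i⁴ for all i; (2) e_i³·e_j = 0 for all i ≠ j; (3) (e_i²·e_j)·e_i = 0 for all i ≠ j; (4) e_i²·e_j² = (e_i²·e_j)·e_j = (e_j²·e_i)·e_i for all i ≠ j; (5) (e_i²·e_j)·e_k = 0 for all pairwise distinct i, j, k. -/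

import Mathlib

/-!
The Jordan identity `(x² y) x = x² (y x)` says that `x²` lies in the left nucleus
`{a | ∀ y z, (a y) z = a (y z)}`. In an evolution algebra every product lies in the span of the
`eᵢ²`, so the identity holds as soon as every `eᵢ²` is in the nucleus. Conversely, the identity at
`eᵢ` gives `(eᵢ² y) eᵢ = eᵢ² (y eᵢ)`, and since `(eₖ ± eᵢ)² = eₖ² + eᵢ²` for `k ≠ i`, adding the
identities at `eₖ + eᵢ` and `eₖ - eᵢ` gives `(eᵢ² y) eₖ = eᵢ² (y eₖ)` (this is where `2 ≠ 0`
enters). Nucleus membership of `eᵢ²` can be tested on pairs `(eⱼ, eₖ)`, and as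
`eⱼ eₖ = δⱼₖ eⱼ²` these tests are exactly the five conditions.
-/

open Submodule

namespace LinearMap

variable {R A ι : Type*} [CommRing R] [AddCommGroup A] [Module R A]

def IsJordan (m : A →ₗ[R] A →ₗ[R] A) : Prop :=
  ∀ x y, m (m (m x x) y) x = m (m x x) (m y x)

def leftNucleus (m : A →ₗ[R] A →ₗ[R] A) : Submodule R A where
  carrier := {a | ∀ y z, m (m a y) z = m a (m y z)}
  add_mem' {a b} ha hb y z := by simp only [map_add, add_apply, ha y z, hb y z]
  zero_mem' y z := by simp
  smul_mem' c a ha y z := by simp only [map_smul, smul_apply, ha y z]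

theorem mem_leftNucleus_iff {m : A →ₗ[R] A →ₗ[R] A} {a : A} :
    a ∈ m.leftNucleus ↔ ∀ y z, m (m a y) z = m a (m y z) := Iff.rfl

theorem mem_leftNucleus_iff_basis {m : A →ₗ[R] A →ₗ[R] A} (b : Module.Basis ι R A) {a : A} :
    a ∈ m.leftNucleus ↔ ∀ j k, m (m a (b j)) (b k) = m a (m (b j) (b k)) :=
  ⟨fun ha _ _ => ha _ _, fun h y z =>
    congr_fun₂ (ext_basis (B := m.comp (m a)) (B' := m.compr₂ (m a)) b b h) y z⟩

theorem apply_mem_span_sq_of_orthogonal {m : A →ₗ[R] A →ₗ[R] A} (e : Module.Basis ι R A)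
    (horth : ∀ i j, i ≠ j → m (e i) (e j) = 0) (x y : A) :
    m x y ∈ span R (Set.range fun i => m (e i) (e i)) := by
  set S := span R (Set.range fun i => m (e i) (e i))
  have h : m.compr₂ S.mkQ = 0 := ext_basis e e fun i j => by
    rcases eq_or_ne i j with rfl | hij
    · simpa using subset_span (Set.mem_range_self i)
    · simp [horth i j hij]
  simpa [← Submodule.Quotient.mk_eq_zero] using congr_fun₂ h x y

theorem IsJordan.sq_mul_mul_eq_of_orthogonal (h2 : IsSMulRegular A (2 : R))
    {m : A →ₗ[R] A →ₗ[R] A} (hJ : m.IsJordan) {u v : A} (huv : m u v = 0) (hvu : m v u = 0)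
    (y : A) : m (m (m v v) y) u = m (m v v) (m y u) := by
  have hplus := hJ (u + v) y
  have hminus := hJ (u - v) y
  simp only [map_add, map_sub, add_apply, sub_apply, huv, hvu, map_zero, zero_apply] at hplus hminus
  have hsum : (2 : R) • (m (m (m u u + m v v) y) u) = (2 : R) • m (m u u + m v v) (m y u) := by
    simp only [map_add, add_apply, two_smul]
    linear_combination (norm := abel) hplus + hminus
  have := h2 hsum
  simp only [map_add, add_apply, hJ u y] at this
  exact add_left_cancel this

section Evolution

variable {m : A →ₗ[R] A →ₗ[R] A} (e : Module.Basis ι R A)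

theorem IsJordan.sq_mem_leftNucleus (horth : ∀ i j, i ≠ j → m (e i) (e j) = 0)
    (h2 : IsSMulRegular A (2 : R)) (hJ : m.IsJordan) (i : ι) :
    m (e i) (e i) ∈ m.leftNucleus := by
  refine (mem_leftNucleus_iff_basis e).2 fun j k => ?_
  rcases eq_or_ne k i with rfl | hki
  · exact hJ (e k) (e j)
  · exact hJ.sq_mul_mul_eq_of_orthogonal h2 (horth k i hki) (horth i k hki.symm) (e j)

theorem isJordan_of_forall_sq_mem_leftNucleus (horth : ∀ i j, i ≠ j → m (e i) (e j) = 0)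
    (h : ∀ i, m (e i) (e i) ∈ m.leftNucleus) :
    m.IsJordan := fun x y =>
  mem_leftNucleus_iff.1
    (span_le.2 (Set.range_subset_iff.2 h) (apply_mem_span_sq_of_orthogonal e horth x x)) y x

theorem isJordan_iff_forall_sq_mem_leftNucleus (horth : ∀ i j, i ≠ j → m (e i) (e j) = 0)
    (h2 : IsSMulRegular A (2 : R)) :
    m.IsJordan ↔ ∀ i, m (e i) (e i) ∈ m.leftNucleus :=
  ⟨fun hJ => hJ.sq_mem_leftNucleus e horth h2, isJordan_of_forall_sq_mem_leftNucleus e horth⟩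

end Evolution

end LinearMap

open LinearMap in
theorem evolution_algebra_jordan_iff
    (F : Type*) [Field F] (h2 : (2 : F) ≠ 0)
    (A : Type*) [AddCommGroup A] [Module F A]
    (m : A →ₗ[F] A →ₗ[F] A) (hcomm : ∀ x y : A, m x y = m y x)
    (n : ℕ) (e : Module.Basis (Fin n) F A)
    (hnat : ∀ i j : Fin n, i ≠ j → m (e i) (e j) = 0) :
    (∀ x y : A, m (m (m x x) y) x = m (m x x) (m y x)) ↔
      ((∀ i : Fin n,
          m (m (e i) (e i)) (m (e i) (e i)) = m (m (m (e i) (e i)) (e i)) (e i)) ∧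
       (∀ i j : Fin n, i ≠ j → m (m (m (e i) (e i)) (e i)) (e j) = 0) ∧
       (∀ i j : Fin n, i ≠ j → m (m (m (e i) (e i)) (e j)) (e i) = 0) ∧
       (∀ i j : Fin n, i ≠ j →
          m (m (e i) (e i)) (m (e j) (e j)) = m (m (m (e i) (e i)) (e j)) (e j) ∧
          m (m (e i) (e i)) (m (e j) (e j)) = m (m (m (e j) (e j)) (e i)) (e i)) ∧
       (∀ i j k : Fin n, i ≠ j → j ≠ k → i ≠ k →
          m (m (m (e i) (e i)) (e j)) (e k) = 0)) := by
  change m.IsJordan ↔ _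
  simp only [isJordan_iff_forall_sq_mem_leftNucleus e hnat (IsSMulRegular.of_ne_zero h2),
    mem_leftNucleus_iff_basis e]
  constructor
  · intro h
    refine ⟨fun i => (h i i i).symm, fun i j hij => ?_, fun i j hij => ?_, fun i j hij => ?_,
      fun i j k hij hjk _ => ?_⟩
    · rw [h, hnat i j hij, map_zero]
    · rw [h, hnat j i hij.symm, map_zero]
    · rw [h, h, hcomm (m (e j) (e j))]; exact ⟨rfl, rfl⟩
    · rw [h, hnat j k hjk, map_zero]
  · rintro ⟨hsq, hcube, hback, hmixed, hdistinct⟩ i j k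
    rcases eq_or_ne j k with rfl | hjk
    · rcases eq_or_ne i j with rfl | hij
      · exact (hsq i).symm
      · exact ((hmixed i j hij).1).symm
    · rw [hnat j k hjk, map_zero]
      rcases eq_or_ne i j with rfl | hij
      · exact hcube i k hjk
      · rcases eq_or_ne i k with rfl | hik
        · exact hback i j hij
        · exact hdistinct i j k hij hjk hik
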